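/- Let h be a multisegment, c an integer, and m₁ a nonempty multisegment at the point c. Let m₂ be obtained from m₁ by replacing one segment [c,b₀] of m₁ with a longer segment [c,b], b > b₀. Suppose both m₁ and m₂ are admissible to h. Then fs(m₁,h) ≤ᵃ_c fs(m₂,h). -/

import Mathlib

noncomputable section
open Classical

/-- A segment `[a,b]`: a pair of integers with `a ≤ b`, identified with the
integer interval `{a, a+1, …, b}`. -/
def Seg : Type := {p : ℤ × ℤ // p.1 ≤ p.2}

/-- Constructor for segments. -/
def Seg.mk (a b : ℤ) (hab : a ≤ b) : Seg := Subtype.mk (a, b) hab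

instance : DecidableEq Seg := inferInstanceAs (DecidableEq {p : ℤ × ℤ // p.1 ≤ p.2})

instance : Inhabited Seg := ⟨Seg.mk 0 0 le_rfl⟩

/-- The lexicographic ordering `≼ᴸ` on segments: `[a,b] ≤ [a',b']` iff `a < a'`,
or `a = a'` and `b ≤ b'`. -/
instance : LinearOrder Seg :=
  LinearOrder.lift' (fun Δ => toLex (Subtype.val Δ))
    (fun _ _ hh => Subtype.ext (toLex.injective hh))

/-- `a(Δ)`, the left endpoint. -/
def segA (Δ : Seg) : ℤ := (Subtype.val Δ).1

/-- `b(Δ)`, the right endpoint. -/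
def segB (Δ : Seg) : ℤ := (Subtype.val Δ).2

/-- `[a,b]` as a multiset of segments: a singleton if `a ≤ b`, empty otherwise
("empty segments are discarded"). -/
def mkSeg? (a b : ℤ) : Multiset Seg := if h : a ≤ b then {Seg.mk a b h} else 0

/-- `⁻Δ = [a+1,b]`, as a multiset (the empty segment being discarded). -/
def negSeg (Δ : Seg) : Multiset Seg := mkSeg? (segA Δ + 1) (segB Δ)

/-- `⁻m` for a multisegment `m`. -/
def negM (m : Multiset Seg) : Multiset Seg := m.bind negSeg

/-- `m[c]`: the submultiset of segments of `m` starting at `c`. -/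
def atc (m : Multiset Seg) (c : ℤ) : Multiset Seg := m.filter (fun Δ => segA Δ = c)

/-- `Δ ⊆ Δ'` as intervals. -/
def Subseg (Δ Δ' : Seg) : Prop := segA Δ' ≤ segA Δ ∧ segB Δ ≤ segB Δ'

/-- Two segments are linked: their union is an interval and neither contains
the other. -/
def Linked (Δ Δ' : Seg) : Prop :=
  segA Δ ≤ segB Δ' + 1 ∧ segA Δ' ≤ segB Δ + 1 ∧ ¬ Subseg Δ Δ' ∧ ¬ Subseg Δ' Δ

/-- `Δ = [a,b]` is admissible to `h`: `h` contains a segment `[a,c]` with `c ≥ b`. -/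
def SegAdmissible (Δ : Seg) (h : Multiset Seg) : Prop :=
  ∃ D ∈ h, segA D = segA Δ ∧ segB Δ ≤ segB D

/-- The tail of the removal sequence: recursively pick the `≺ᴸ`-minimal segment
`[aᵢ,bᵢ]` of `h` with `a_{i-1} < aᵢ` and `b ≤ bᵢ < b_{i-1}`. -/
def removalTail (h : Multiset Seg) (b : ℤ) : ℕ → ℤ → ℤ → List Seg
  | 0, _, _ => []
  | fuel + 1, aprev, bprev =>
    if hx : ∃ D, (D ∈ h ∧ aprev < segA D ∧ b ≤ segB D ∧ segB D < bprev) ∧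
        ∀ D', (D' ∈ h ∧ aprev < segA D' ∧ b ≤ segB D' ∧ segB D' < bprev) → D ≤ D' then
      Classical.choose hx ::
        removalTail h b fuel (segA (Classical.choose hx)) (segB (Classical.choose hx))
    else []

/-- The removal sequence for `(Δ, h)`: `Δ₁` is a shortest segment `[a,c]` of `h`
with `c ≥ b`, followed by the recursively chosen segments. (Empty if `Δ` is not
admissible to `h`.) -/
def removalSeq (Δ : Seg) (h : Multiset Seg) : List Seg :=
  if hx : ∃ D, (D ∈ h ∧ segA D = segA Δ ∧ segB Δ ≤ segB D) ∧
      ∀ D', (D' ∈ h ∧ segA D' = segA Δ ∧ segB Δ ≤ segB D') → segB D ≤ segB D' then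
    Classical.choose hx ::
      removalTail h (segB Δ) (segB (Classical.choose hx) - segB Δ).toNat
        (segA (Classical.choose hx)) (segB (Classical.choose hx))
  else []

/-- `Υ(Δ,h)`: the first segment of the removal sequence for `(Δ,h)`. -/
def Upsilon (Δ : Seg) (h : Multiset Seg) : Seg := (removalSeq Δ h).headD default

/-- The truncations `Δ₁ᵗʳ, …, Δᵣᵗʳ` of a removal sequence:
`Δᵢᵗʳ = [a_{i+1}, bᵢ]` for `i < r` and `Δᵣᵗʳ = [b+1, bᵣ]` (possibly empty). -/
def truncList (b : ℤ) : List Seg → Multiset Seg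
  | [] => 0
  | [D] => mkSeg? (b + 1) (segB D)
  | D :: D' :: rest => mkSeg? (segA D') (segB D) + truncList b (D' :: rest)

/-- `r(Δ,h) = h − Δ₁ − … − Δᵣ + Δ₁ᵗʳ + … + Δᵣᵗʳ`, with `none` playing the role
of the infinity multisegment `∞`. -/
def segRemove (Δ : Seg) (h : Multiset Seg) : Option (Multiset Seg) :=
  if SegAdmissible Δ h then
    some (h - (removalSeq Δ h : Multiset Seg) + truncList (segB Δ) (removalSeq Δ h))
  else none

/-- Iterated removal along a list of segments (also `r(Δ,∞) = ∞`). -/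
def rList : List Seg → Option (Multiset Seg) → Option (Multiset Seg)
  | [], o => o
  | Δ :: rest, o => rList rest (o.bind (fun x => segRemove Δ x))

/-- `r(m,h)` for a multisegment `m`: apply the removals along the segments of
`m` listed in an ascending (here: `≺ᴸ`-sorted) order. -/
def rM (m h : Multiset Seg) : Option (Multiset Seg) :=
  rList (m.sort (· ≤ ·)) (some h)

/-- The smallest integer `a` with `n[a] ≠ ∅` (junk value `0` for `n = ∅`). -/
def minStart (n : Multiset Seg) : ℤ := ((n.map segA).sort (· ≤ ·)).headD 0

/-- `Υ(Δ₁,r₀), Υ(Δ₂,r₁), …` computed sequentially along a list of segments. -/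
def fsList : List Seg → Multiset Seg → Multiset Seg
  | [], _ => 0
  | Δ :: rest, h =>
    Upsilon Δ h ::ₘ
      (match segRemove Δ h with
        | some h' => fsList rest h'
        | none => 0)

/-- `fs(n,h)`: with `a` the smallest integer such that `n[a] ≠ ∅` and
`n[a] = {Δ₁, …, Δₖ}`, this is `{Υ(Δ₁,r₀), …, Υ(Δₖ,r_{k-1})}` if `n[a]` is
admissible to `h`, and `∅` otherwise (also `fs(∅,h) = ∅`). -/
def fs (n h : Multiset Seg) : Multiset Seg :=
  if n = 0 then 0
  else if rM (atc n (minStart n)) h ≠ none then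
    fsList ((atc n (minStart n)).sort (· ≤ ·)) h
  else 0

/-- `trr(n,h) = h − fs(n,h) + ⁻(fs(n,h))`. -/
def trr (n h : Multiset Seg) : Multiset Seg := h - fs n h + negM (fs n h)

/-- `trd(n,h) = n − n[a] + ⁻(n[a])` where `a` is the smallest integer with
`n[a] ≠ ∅` (and `trd(∅,h) = ∅`). -/
def trd (n h : Multiset Seg) : Multiset Seg :=
  if n = 0 then 0 else n - atc n (minStart n) + negM (atc n (minStart n))

/-- The pairs `(nᵢ, hᵢ)` of the fine chain: `n₀ = n`, `h₀ = h`,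
`nᵢ = trd(n_{i-1}, h_{i-1})`, `hᵢ = trr(n_{i-1}, h_{i-1})`. -/
def fcPair (n h : Multiset Seg) : ℕ → Multiset Seg × Multiset Seg
  | 0 => (n, h)
  | i + 1 => (trd (fcPair n h i).1 (fcPair n h i).2, trr (fcPair n h i).1 (fcPair n h i).2)

/-- The fine chain `fc_h(n)`: the sequence `fs(n₀,h₀), fs(n₁,h₁), …`. -/
def fc (h n : Multiset Seg) (i : ℕ) : Multiset Seg := fs (fcPair n h i).1 (fcPair n h i).2

/-- `n` is obtained from `m` by an elementary intersection-union operation: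
`n = m − Δ − Δ' + (Δ ∪ Δ') + (Δ ∩ Δ')` for a pair of linked segments `Δ, Δ'`
of `m` (intersection omitted if empty). -/
def elemIU (m n : Multiset Seg) : Prop :=
  ∃ Δ Δ', Δ ∈ m ∧ Δ' ∈ m.erase Δ ∧ Linked Δ Δ' ∧
    n = (m.erase Δ).erase Δ'
        + mkSeg? (min (segA Δ) (segA Δ')) (max (segB Δ) (segB Δ'))
        + mkSeg? (max (segA Δ) (segA Δ')) (min (segB Δ) (segB Δ'))

/-- The Zelevinsky ordering: `n ≤_Z m` iff `n = m` or `n` is obtained from `m`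
by a finite sequence of elementary intersection-union operations. -/
def leZ (n m : Multiset Seg) : Prop := Relation.ReflTransGen elemIU m n

/-- The cuspidal support of a multisegment: the multiset union of its segments,
as a multiset of integers. -/
def csupp (m : Multiset Seg) : Multiset ℤ :=
  m.bind (fun Δ => (Finset.Icc (segA Δ) (segB Δ)).val)

/-- The `b`-values of a multisegment, sorted in descending order. -/
def bDesc (m : Multiset Seg) : List ℤ := ((m.map segB).sort (· ≤ ·)).reverse

/-- `m₁ ≤ᵃ_c m₂` for multisegments at a point `c`: with segments labelled
`Δ_{1,k} ≤ᵃ_c … ≤ᵃ_c Δ_{1,1}` and `Δ_{2,r} ≤ᵃ_c … ≤ᵃ_c Δ_{2,1}`, require `k ≤ r`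
and `Δ_{1,i} ≤ᵃ_c Δ_{2,i}` for all `i ≤ k`. -/
def leA (m₁ m₂ : Multiset Seg) : Prop :=
  (bDesc m₁).length ≤ (bDesc m₂).length ∧
    ∀ i < (bDesc m₁).length, (bDesc m₁).getD i 0 ≤ (bDesc m₂).getD i 0

/-- `m₁ <ᵃ_c m₂`. -/
def ltA (m₁ m₂ : Multiset Seg) : Prop := leA m₁ m₂ ∧ m₁ ≠ m₂

/-- The fine chain ordering `n <^{fc} n'` (with respect to `h`). -/
def ltFC (h n n' : Multiset Seg) : Prop :=
  ∃ i, (∀ j < i, fc h n j = fc h n' j) ∧ ltA (fc h n i) (fc h n' i)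

/-- `n ≤^{fc} n'`: either `n <^{fc} n'` or the two fine chains are equal. -/
def leFC (h n n' : Multiset Seg) : Prop := ltFC h n n' ∨ ∀ i, fc h n i = fc h n' i

/-- Local minimizability of `(n,h)`: with `a` the smallest integer such that
`n[a] ≠ ∅`, there is a segment `Δ̄` in `n[a+1]` with
`|{Δ ∈ n[a] : Δ̄ ⊆ Δ}| < |{Δ ∈ fs(n,h) : Δ̄ ⊆ Δ}|`. -/
def locallyMin (n h : Multiset Seg) : Prop :=
  ∃ Δb ∈ atc n (minStart n + 1),
    ((atc n (minStart n)).filter (fun Δ => Subseg Δb Δ)).card <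
      ((fs n h).filter (fun Δ => Subseg Δb Δ)).card

/-- The shortest segment of the removal sequence for `(Δ,h)` whose interval
contains `x` (by the nesting property, the last such one in the sequence). -/
def shortestCont (Δ : Seg) (h : Multiset Seg) (x : ℤ) : Seg :=
  (((removalSeq Δ h).filter (fun D => decide (segA D ≤ x ∧ x ≤ segB D))).getLast?).getD default

/-- The non-overlapping property for `(Δ, Δ', h)`: for the shortest segment `Δ̄`
in the removal sequence for `(Δ,h)` containing `a(Δ') − 1`, one has `Δ' ⊄ Δ̄`. -/
def NonOverlap (Δ Δ' : Seg) (h : Multiset Seg) : Prop :=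
  ¬ Subseg Δ' (shortestCont Δ h (segA Δ' - 1))

/-- `ε_Δ(h) = |{Δ̃ ∈ h[a(Δ)] : Δ ⊆ Δ̃}|`, counted with multiplicity. -/
def epsilonSeg (Δ : Seg) (h : Multiset Seg) : ℕ :=
  ((atc h (segA Δ)).filter (fun D => Subseg Δ D)).card

/-- `η_{Δ'}(h) = η_{Δ'}(h')`: componentwise equality of
`(ε_{[a',b']}, ε_{[a'+1,b']}, …, ε_{[b',b']})`. -/
def etaEq (Δ' : Seg) (h h' : Multiset Seg) : Prop :=
  ∀ c, segA Δ' ≤ c → ∀ hc : c ≤ segB Δ',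
    epsilonSeg (Seg.mk c (segB Δ') hc) h = epsilonSeg (Seg.mk c (segB Δ') hc) h'

/-- The intermediate segment property for `(Δ, Δ', h)`. -/
def IntermediateSeg (Δ Δ' : Seg) (h : Multiset Seg) : Prop :=
  ∃ D ∈ h, segA Δ ≤ segA D ∧ segA D < segA Δ' ∧ segB Δ ≤ segB D ∧ segB D < segB Δ'

/-- Helper to build segments from literals. -/
def sg (a b : ℤ) (hab : a ≤ b := by decide) : Seg := Seg.mk a b hab

/-!
For a multisegment at the point `c`, a removal `r(Δ,·)` with `a(Δ) = c` takes exactly one segment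
starting at `c` out of `h`, namely `Υ(Δ,h)`, the shortest segment of `h[c]` containing `Δ`, and
puts back only segments starting after `c`. Hence the `b`-values of `fs(m,h)` arise from a greedy
matching: the `b`-values of `m`, in increasing order, are each matched with the least still
unused `b`-value of `h[c]` above them. Lengthening a segment of `m` raises the sorted list of
targets pointwise, and greedy matching is monotone in its targets.
-/

section GreedyMatching

variable {α : Type*} [LinearOrder α]

def pickAbove (t : α) (s : Multiset α) : Option α :=
  ((s.filter (t ≤ ·)).sort (· ≤ ·)).head?

def greedyMatch : List α → Multiset α → Option (List α)
  | [], _ => some []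
  | t :: ts, s => (pickAbove t s).bind fun β => (greedyMatch ts (s.erase β)).map (β :: ·)

lemma pickAbove_eq_some_iff {t β : α} {s : Multiset α} :
    pickAbove t s = some β ↔ β ∈ s ∧ t ≤ β ∧ ∀ γ ∈ s, t ≤ γ → β ≤ γ := by
  have hmem : ∀ x, x ∈ (s.filter (t ≤ ·)).sort (· ≤ ·) ↔ x ∈ s ∧ t ≤ x := by simp
  have hsorted := Multiset.pairwise_sort (s.filter (t ≤ ·)) (· ≤ ·)
  unfold pickAbove
  rcases hl : (s.filter (t ≤ ·)).sort (· ≤ ·) with _ | ⟨a, l⟩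
  · simp only [hl, List.not_mem_nil, false_iff] at hmem
    simp only [List.head?_nil, reduceCtorEq, false_iff, not_and]
    exact fun hβ htβ _ => hmem β ⟨hβ, htβ⟩
  · rw [hl] at hmem hsorted
    have ha := (hmem a).1 List.mem_cons_self
    have hleast : ∀ γ ∈ s, t ≤ γ → a ≤ γ := fun γ hγ htγ =>
      (List.mem_cons.1 ((hmem γ).2 ⟨hγ, htγ⟩)).elim (fun h => h.ge)
        (List.rel_of_pairwise_cons hsorted)
    simp only [List.head?_cons, Option.some.injEq]
    constructor
    · rintro rfl
      exact ⟨ha.1, ha.2, hleast⟩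
    · rintro ⟨hβ, htβ, hmin⟩
      exact le_antisymm (hleast β hβ htβ) (hmin a ha.1 ha.2)

lemma greedyMatch_cons_eq_some_iff {t : α} {ts P : List α} {s : Multiset α} :
    greedyMatch (t :: ts) s = some P ↔
      ∃ β, pickAbove t s = some β ∧ ∃ P', greedyMatch ts (s.erase β) = some P' ∧ β :: P' = P := by
  simp only [greedyMatch, Option.bind_eq_some_iff, Option.map_eq_some_iff]

lemma exists_le_of_mem_greedyMatch : ∀ {T P : List α} {s : Multiset α},
    greedyMatch T s = some P → ∀ β ∈ P, β ∈ s ∧ ∃ t ∈ T, t ≤ β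
  | [], P, s, h => by
    cases Option.some.inj h
    simp
  | t :: ts, P, s, h => by
    obtain ⟨p, hp, P', hP', rfl⟩ := greedyMatch_cons_eq_some_iff.1 h
    obtain ⟨hps, htp, -⟩ := pickAbove_eq_some_iff.1 hp
    intro β hβ
    rcases List.mem_cons.1 hβ with rfl | hβ
    · exact ⟨hps, t, List.mem_cons_self, htp⟩
    · obtain ⟨hβs, u, hu, huβ⟩ := exists_le_of_mem_greedyMatch hP' β hβ
      exact ⟨Multiset.mem_of_mem_erase hβs, u, List.mem_cons_of_mem _ hu, huβ⟩

lemma pairwise_greedyMatch : ∀ {T P : List α} {s : Multiset α},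
    T.Pairwise (· ≤ ·) → greedyMatch T s = some P → P.Pairwise (· ≤ ·)
  | [], P, s, _, h => by
    cases Option.some.inj h
    exact List.Pairwise.nil
  | t :: ts, P, s, hT, h => by
    obtain ⟨p, hp, P', hP', rfl⟩ := greedyMatch_cons_eq_some_iff.1 h
    rw [List.pairwise_cons] at hT
    refine List.pairwise_cons.2 ⟨fun β hβ => ?_, pairwise_greedyMatch hT.2 hP'⟩
    obtain ⟨hβs, u, hu, huβ⟩ := exists_le_of_mem_greedyMatch hP' β hβ
    exact (pickAbove_eq_some_iff.1 hp).2.2 β (Multiset.mem_of_mem_erase hβs) ((hT.1 u hu).trans huβ)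

/-- Comparing the pools only above `τ` makes the induction go through: a value matched in `B₁`
but not in `B₂` lies, if `B₂` contains it at all, below the current target of `T₂`. -/
lemma forall₂_greedyMatch {T₁ T₂ P₁ P₂ : List α} {B₁ B₂ : Multiset α} {τ : α}
    (hT : List.Forall₂ (· ≤ ·) T₁ T₂) (hT₂ : T₂.Pairwise (· ≤ ·)) (hτ : ∀ u ∈ T₂, τ ≤ u)
    (hB : ∀ v, τ ≤ v → B₂.count v ≤ B₁.count v)
    (h₁ : greedyMatch T₁ B₁ = some P₁) (h₂ : greedyMatch T₂ B₂ = some P₂) :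
    List.Forall₂ (· ≤ ·) P₁ P₂ := by
  induction hT generalizing τ B₁ B₂ P₁ P₂ with
  | nil =>
    cases Option.some.inj h₁
    cases Option.some.inj h₂
    exact List.Forall₂.nil
  | @cons t₁ t₂ T₁ T₂ ht _ ih =>
    obtain ⟨p, hp, P₁, hP₁, rfl⟩ := greedyMatch_cons_eq_some_iff.1 h₁
    obtain ⟨q, hq, P₂, hP₂, rfl⟩ := greedyMatch_cons_eq_some_iff.1 h₂
    obtain ⟨-, -, hpmin⟩ := pickAbove_eq_some_iff.1 hp
    obtain ⟨hqB, htq, hqmin⟩ := pickAbove_eq_some_iff.1 hq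
    rw [List.pairwise_cons] at hT₂
    have hτt₂ : τ ≤ t₂ := hτ t₂ List.mem_cons_self
    have hqB₁ : q ∈ B₁ :=
      Multiset.count_pos.1 ((Multiset.count_pos.2 hqB).trans_le (hB q (hτt₂.trans htq)))
    have hpq : p ≤ q := hpmin q hqB₁ (ht.trans htq)
    refine List.Forall₂.cons hpq (ih hT₂.2 hT₂.1 (fun v hv => ?_) hP₁ hP₂)
    have hcount := hB v (hτt₂.trans hv)
    rcases eq_or_ne v q with rfl | hvq
    · rw [Multiset.count_erase_self]
      rcases eq_or_ne v p with rfl | hvp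
      · rw [Multiset.count_erase_self]
        omega
      · rw [Multiset.count_erase_of_ne hvp]
        omega
    · rw [Multiset.count_erase_of_ne hvq]
      rcases eq_or_ne v p with rfl | hvp
      · -- `p < q` and `q` is least in `B₂` above `t₂`, so `p ∉ B₂`
        rw [Multiset.count_eq_zero.2 fun hvB => hvq (le_antisymm hpq (hqmin v hvB hv))]
        exact Nat.zero_le _
      · rw [Multiset.count_erase_of_ne hvp]
        exact hcount

end GreedyMatching

section SortedLists

variable {α : Type*} [LinearOrder α]

lemma forall₂_cons_orderedInsert : ∀ {l : List α} {a y : α}, l.Pairwise (· ≤ ·) → a ≤ y →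
    (∀ z ∈ l, a ≤ z) → List.Forall₂ (· ≤ ·) (a :: l) (l.orderedInsert (· ≤ ·) y)
  | [], _, _, _, hay, _ => List.Forall₂.cons hay List.Forall₂.nil
  | b :: l, a, y, hl, hay, hal => by
    rw [List.pairwise_cons] at hl
    by_cases hyb : y ≤ b
    · rw [List.orderedInsert_cons_of_le _ _ hyb]
      exact List.Forall₂.cons hay (List.forall₂_refl _)
    · rw [List.orderedInsert_cons, if_neg hyb]
      exact List.Forall₂.cons (hal b List.mem_cons_self)
        (forall₂_cons_orderedInsert hl.2 (not_le.1 hyb).le hl.1)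

lemma forall₂_orderedInsert_erase : ∀ {l : List α} {x y : α}, l.Pairwise (· ≤ ·) → x ∈ l →
    x ≤ y → List.Forall₂ (· ≤ ·) l ((l.erase x).orderedInsert (· ≤ ·) y)
  | a :: l, x, y, hl, hx, hxy => by
    rw [List.pairwise_cons] at hl
    rcases eq_or_ne a x with rfl | hax
    · rw [List.erase_cons_head]
      exact forall₂_cons_orderedInsert hl.2 hxy hl.1
    · have hxl : x ∈ l := (List.mem_cons.1 hx).resolve_left hax.symm
      have hya : ¬ y ≤ a := fun hya => hax (le_antisymm (hl.1 x hxl) (hxy.trans hya))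
      rw [List.erase_cons_tail (by simpa using hax), List.orderedInsert_cons, if_neg hya]
      exact List.Forall₂.cons le_rfl (forall₂_orderedInsert_erase hl.2 hxl hxy)

lemma forall₂_sort_erase_add_singleton {s : Multiset α} {x y : α} (hx : x ∈ s) (hxy : x ≤ y) :
    List.Forall₂ (· ≤ ·) (s.sort (· ≤ ·)) ((s.erase x + {y}).sort (· ≤ ·)) := by
  have hsort : (s.erase x + {y}).sort (· ≤ ·) =
      ((s.sort (· ≤ ·)).erase x).orderedInsert (· ≤ ·) y := by
    refine List.Perm.eq_of_pairwise' (Multiset.pairwise_sort _ _)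
      (((Multiset.pairwise_sort _ _).erase _).orderedInsert _ _) ?_
    rw [← Multiset.coe_eq_coe, Multiset.sort_eq,
      Multiset.coe_eq_coe.2 (List.perm_orderedInsert _ _ _), ← Multiset.cons_coe,
      ← Multiset.coe_erase, Multiset.sort_eq, add_comm, Multiset.singleton_add]
  rw [hsort]
  exact forall₂_orderedInsert_erase (Multiset.pairwise_sort _ _) ((Multiset.mem_sort _).2 hx) hxy

lemma sort_coe_of_pairwise {l : List α} (hl : l.Pairwise (· ≤ ·)) :
    (l : Multiset α).sort (· ≤ ·) = l :=
  List.mergeSort_eq_self _ hl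

end SortedLists

lemma segA_le_segB (D : Seg) : segA D ≤ segB D := D.2

lemma le_iff_segB_le_of_segA_eq {x y : Seg} (h : segA x = segA y) : x ≤ y ↔ segB x ≤ segB y := by
  show toLex x.val ≤ toLex y.val ↔ _
  rw [Prod.Lex.toLex_le_toLex]
  simp only [segA, segB] at h ⊢
  omega

lemma segA_of_mem_mkSeg? {E : Seg} {a b : ℤ} (hE : E ∈ mkSeg? a b) : segA E = a := by
  unfold mkSeg? at hE
  split at hE
  · rw [Multiset.mem_singleton.1 hE]
    rfl
  · simp at hE

lemma lt_segA_of_mem_removalTail {h : Multiset Seg} {b : ℤ} :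
    ∀ {fuel : ℕ} {a₀ b₀ : ℤ} {D : Seg}, D ∈ removalTail h b fuel a₀ b₀ → a₀ < segA D
  | fuel + 1, a₀, b₀, D, hD => by
    rw [removalTail] at hD
    split at hD
    · rename_i hx
      have hlt := (Classical.choose_spec hx).1.2.1
      rcases List.mem_cons.1 hD with rfl | hD
      · exact hlt
      · exact hlt.trans (lt_segA_of_mem_removalTail hD)
    · simp at hD

lemma segA_of_mem_truncList {b : ℤ} :
    ∀ {L : List Seg} {E : Seg}, E ∈ truncList b L → segA E = b + 1 ∨ ∃ D ∈ L.tail, segA E = segA D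
  | [D], E, hE => Or.inl (segA_of_mem_mkSeg? (by simpa [truncList] using hE))
  | D :: D' :: L, E, hE => by
    rw [truncList, Multiset.mem_add] at hE
    rcases hE with hE | hE
    · exact Or.inr ⟨D', List.mem_cons_self, segA_of_mem_mkSeg? hE⟩
    · rcases segA_of_mem_truncList hE with hE | ⟨D'', hD'', hE⟩
      · exact Or.inl hE
      · exact Or.inr ⟨D'', List.mem_cons_of_mem _ hD'', hE⟩

lemma exists_shortest_of_segAdmissible {Δ : Seg} {h : Multiset Seg} (hadm : SegAdmissible Δ h) :
    ∃ D, (D ∈ h ∧ segA D = segA Δ ∧ segB Δ ≤ segB D) ∧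
      ∀ D', (D' ∈ h ∧ segA D' = segA Δ ∧ segB Δ ≤ segB D') → segB D ≤ segB D' := by
  obtain ⟨D₀, hD₀⟩ := hadm
  obtain ⟨D, hD, hmin⟩ := Finset.exists_min_image
    (h.filter fun D => segA D = segA Δ ∧ segB Δ ≤ segB D).toFinset segB ⟨D₀, by simpa using hD₀⟩
  simp only [Multiset.mem_toFinset, Multiset.mem_filter] at hD hmin
  exact ⟨D, hD, hmin⟩

lemma removalSeq_eq_upsilon_cons {Δ : Seg} {h : Multiset Seg} (hadm : SegAdmissible Δ h) :
    ∃ tl, removalSeq Δ h = Upsilon Δ h :: tl ∧ (∀ D ∈ tl, segA Δ < segA D) ∧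
      (Upsilon Δ h ∈ h ∧ segA (Upsilon Δ h) = segA Δ ∧ segB Δ ≤ segB (Upsilon Δ h)) ∧
      ∀ D ∈ h, segA D = segA Δ → segB Δ ≤ segB D → segB (Upsilon Δ h) ≤ segB D := by
  have hx := exists_shortest_of_segAdmissible hadm
  have hseq : removalSeq Δ h = Classical.choose hx ::
      removalTail h (segB Δ) (segB (Classical.choose hx) - segB Δ).toNat
        (segA (Classical.choose hx)) (segB (Classical.choose hx)) := dif_pos hx
  have hU : Upsilon Δ h = Classical.choose hx := by rw [Upsilon, hseq]; rfl
  obtain ⟨hmem, hmin⟩ := Classical.choose_spec hx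
  rw [← hU] at hmem hmin hseq
  refine ⟨_, hseq, fun D hD => ?_, hmem, fun D hD hA hB => hmin D ⟨hD, hA, hB⟩⟩
  exact hmem.2.1 ▸ lt_segA_of_mem_removalTail hD

lemma upsilon_mem_atc {Δ : Seg} {h : Multiset Seg} (hadm : SegAdmissible Δ h) :
    Upsilon Δ h ∈ atc h (segA Δ) :=
  have ⟨_, _, _, ⟨hU, hUa, _⟩, _⟩ := removalSeq_eq_upsilon_cons hadm
  Multiset.mem_filter.2 ⟨hU, hUa⟩

lemma pickAbove_segB_upsilon {Δ : Seg} {h : Multiset Seg} (hadm : SegAdmissible Δ h) :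
    pickAbove (segB Δ) ((atc h (segA Δ)).map segB) = some (segB (Upsilon Δ h)) := by
  obtain ⟨-, -, -, ⟨-, -, hUb⟩, hmin⟩ := removalSeq_eq_upsilon_cons hadm
  refine pickAbove_eq_some_iff.2
    ⟨Multiset.mem_map_of_mem _ (upsilon_mem_atc hadm), hUb, fun γ hγ hγb => ?_⟩
  obtain ⟨D, hD, rfl⟩ := Multiset.mem_map.1 hγ
  exact hmin D (Multiset.mem_filter.1 hD).1 (Multiset.mem_filter.1 hD).2 hγb

lemma segRemove_eq_some {Δ : Seg} {h h' : Multiset Seg} (hsr : segRemove Δ h = some h') :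
    SegAdmissible Δ h ∧
      h' = h - (removalSeq Δ h : Multiset Seg) + truncList (segB Δ) (removalSeq Δ h) := by
  unfold segRemove at hsr
  split at hsr
  · exact ⟨by assumption, (Option.some.inj hsr).symm⟩
  · simp at hsr

/-- Only the first segment of the removal sequence starts at `a(Δ)`, and truncations start later. -/
lemma atc_segRemove {Δ : Seg} {h h' : Multiset Seg} (hsr : segRemove Δ h = some h') :
    atc h' (segA Δ) = (atc h (segA Δ)).erase (Upsilon Δ h) := by
  obtain ⟨hadm, rfl⟩ := segRemove_eq_some hsr
  obtain ⟨tl, hseq, htl, ⟨-, hUa, -⟩, -⟩ := removalSeq_eq_upsilon_cons hadm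
  have hab := segA_le_segB Δ
  have htrunc : (truncList (segB Δ) (removalSeq Δ h)).filter (fun D => segA D = segA Δ) = 0 := by
    refine Multiset.filter_eq_nil.2 fun E hE hEa => ?_
    rcases segA_of_mem_truncList hE with hE | ⟨D, hD, hE⟩
    · omega
    · rw [hseq] at hD
      have := htl D hD
      omega
  have hseqf : (removalSeq Δ h : Multiset Seg).filter (fun D => segA D = segA Δ) =
      {Upsilon Δ h} := by
    rw [hseq, ← Multiset.cons_coe,
      Multiset.filter_cons_of_pos (p := fun D => segA D = segA Δ) _ hUa,
      Multiset.filter_eq_nil.2 fun E hE hEa => (htl E hE).ne' hEa]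
    rfl
  unfold atc
  rw [Multiset.filter_add, Multiset.filter_sub, htrunc, hseqf, add_zero, Multiset.sub_singleton]

lemma rList_none : ∀ L : List Seg, rList L none = none
  | [] => rfl
  | _ :: L => rList_none L

lemma map_segB_fsList_eq_greedyMatch {c : ℤ} : ∀ {L : List Seg} {h h' : Multiset Seg},
    (∀ Δ ∈ L, segA Δ = c) → rList L (some h) = some h' →
    ∃ P, greedyMatch (L.map segB) ((atc h c).map segB) = some P ∧ (fsList L h).map segB = P
  | [], _, _, _, _ => ⟨[], rfl, rfl⟩
  | Δ :: L, h, h', hL, hr => by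
    rw [rList, Option.bind_some] at hr
    rcases hsr : segRemove Δ h with _ | h₁
    · rw [hsr, rList_none] at hr
      cases hr
    rw [hsr] at hr
    have hadm := (segRemove_eq_some hsr).1
    have hpick := pickAbove_segB_upsilon hadm
    have hnext : (atc h₁ (segA Δ)).map segB =
        ((atc h (segA Δ)).map segB).erase (segB (Upsilon Δ h)) := by
      rw [atc_segRemove hsr, Multiset.map_erase_of_mem _ _ (upsilon_mem_atc hadm)]
    rw [hL Δ List.mem_cons_self] at hpick hnext
    obtain ⟨P, hP, hfs⟩ :=
      map_segB_fsList_eq_greedyMatch (fun D hD => hL D (List.mem_cons_of_mem _ hD)) hr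
    refine ⟨segB (Upsilon Δ h) :: P, ?_, ?_⟩
    · rw [List.map_cons, greedyMatch, hpick, Option.bind_some, ← hnext, hP]
      rfl
    · rw [fsList, hsr, Multiset.map_cons, hfs]
      rfl

lemma minStart_eq_of_forall_segA_eq {m : Multiset Seg} {c : ℤ} (hm0 : m ≠ 0)
    (hm : ∀ D ∈ m, segA D = c) : minStart m = c := by
  unfold minStart
  rcases hl : (m.map segA).sort (· ≤ ·) with _ | ⟨a, l⟩
  · have hmap := Multiset.sort_eq (m.map segA) (· ≤ ·)
    rw [hl] at hmap
    simp only [Multiset.coe_nil, eq_comm, Multiset.map_eq_zero] at hmap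
    exact absurd hmap hm0
  · obtain ⟨D, hD, rfl⟩ := Multiset.mem_map.1 ((Multiset.mem_sort _).1 (hl ▸ List.mem_cons_self))
    exact hm D hD

lemma sort_map_segB_fs_eq_greedyMatch {m h : Multiset Seg} {c : ℤ} (hm0 : m ≠ 0)
    (hm : ∀ D ∈ m, segA D = c) (hadm : rM m h ≠ none) :
    greedyMatch ((m.map segB).sort (· ≤ ·)) ((atc h c).map segB) =
      some (((fs m h).map segB).sort (· ≤ ·)) := by
  have hatc : atc m (minStart m) = m := by
    rw [minStart_eq_of_forall_segA_eq hm0 hm]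
    exact Multiset.filter_eq_self.2 hm
  have hfs : fs m h = fsList (m.sort (· ≤ ·)) h := by
    unfold fs
    rw [if_neg hm0, hatc, if_pos hadm]
  obtain ⟨h', hr⟩ := Option.ne_none_iff_exists'.1 hadm
  obtain ⟨P, hP, hfsP⟩ := map_segB_fsList_eq_greedyMatch
    (fun D hD => hm D ((Multiset.mem_sort _).1 hD)) hr
  have hsort : (m.sort (· ≤ ·)).map segB = (m.map segB).sort (· ≤ ·) :=
    Multiset.map_sort _ _ _ _ fun x hx y hy =>
      le_iff_segB_le_of_segA_eq ((hm x hx).trans (hm y hy).symm)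
  rw [← hsort, hP, hfs, hfsP, sort_coe_of_pairwise
    (pairwise_greedyMatch (hsort ▸ Multiset.pairwise_sort _ _) hP)]

lemma leA_of_forall₂_sort {m₁ m₂ : Multiset Seg}
    (h : List.Forall₂ (· ≤ ·) ((m₁.map segB).sort (· ≤ ·)) ((m₂.map segB).sort (· ≤ ·))) :
    leA m₁ m₂ := by
  have hrev : List.Forall₂ (· ≤ ·) (bDesc m₁) (bDesc m₂) := List.rel_reverse h
  refine ⟨hrev.length_eq.le, fun i hi => ?_⟩
  rw [List.getD_eq_getElem _ _ hi, List.getD_eq_getElem _ _ (hrev.length_eq ▸ hi)]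
  exact List.forall₂_iff_get.1 hrev |>.2 i hi _

/-- replacing one segment of `m₁` (at the point `c`) by a longer
one gives `fs(m₁,h) ≤ᵃ_c fs(m₂,h)`. -/
theorem statement5 (h m₁ : Multiset Seg) (c b₀ b : ℤ) (hc : c ≤ b₀) (hb : b₀ < b)
    (hpt : ∀ Δ ∈ m₁, segA Δ = c)
    (hmem : Seg.mk c b₀ hc ∈ m₁)
    (m₂ : Multiset Seg)
    (hm₂ : m₂ = m₁.erase (Seg.mk c b₀ hc) + {Seg.mk c b (by omega)})
    (hadm₁ : rM m₁ h ≠ none) (hadm₂ : rM m₂ h ≠ none) :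
    leA (fs m₁ h) (fs m₂ h) := by
  have hpt₂ : ∀ Δ ∈ m₂, segA Δ = c := by
    intro Δ hΔ
    rw [hm₂, Multiset.mem_add, Multiset.mem_singleton] at hΔ
    rcases hΔ with hΔ | rfl
    · exact hpt Δ (Multiset.mem_of_mem_erase hΔ)
    · rfl
  have hT : List.Forall₂ (· ≤ ·) ((m₁.map segB).sort (· ≤ ·)) ((m₂.map segB).sort (· ≤ ·)) := by
    rw [hm₂, Multiset.map_add, Multiset.map_erase_of_mem _ _ hmem]
    exact forall₂_sort_erase_add_singleton (Multiset.mem_map_of_mem _ hmem) hb.le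
  have hτ : ∀ u ∈ (m₂.map segB).sort (· ≤ ·), c ≤ u := fun u hu => by
    obtain ⟨D, hD, rfl⟩ := Multiset.mem_map.1 ((Multiset.mem_sort _).1 hu)
    exact hpt₂ D hD ▸ segA_le_segB D
  exact leA_of_forall₂_sort <| forall₂_greedyMatch hT (Multiset.pairwise_sort _ _) hτ
    (fun _ _ => le_rfl)
    (sort_map_segB_fs_eq_greedyMatch (by rintro rfl; simp at hmem) hpt hadm₁)
    (sort_map_segB_fs_eq_greedyMatch (by rw [hm₂]; simp) hpt₂ hadm₂)
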